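/- For all positive integers q, n, ∏_{k=1}^{∞} (F_{4n(k+q)} + F_{4nq})/(F_{4n(k+q)} - F_{4nq}) = (1/5^q) · ∏_{k=1}^{2q} L_{2nk}/F_{2nk}. -/

import Mathlib

/-!
For even `e`, Binet's formulas give `F (a + 2e) + F a = F (a + e) L e` and
`F (a + 2e) - F a = L (a + e) F e`. With `a = 4nq`, `e = 2n(k+1)` and `ρ m = L (2nm) / F (2nm)`,
the `k`-th factor is therefore `ρ (k+1) / ρ (k+1+2q)`, so the product telescopes: the partial
product up to `K` is `∏_{j=1}^{2q} ρ j` divided by the window `∏_{j<2q} ρ (K+1+j)`. Since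
`L m / F m → √5`, the window tends to `5 ^ q`. All factors are `≥ 1`, so the partial products
converge to the unconditional infinite product.
-/

def lucas : ℕ → ℕ
  | 0 => 2
  | 1 => 1
  | n + 2 => lucas n + lucas (n + 1)

open Real Filter Topology Finset
open scoped goldenRatio

lemma lucas_add_fib (m : ℕ) : lucas m + Nat.fib m = 2 * Nat.fib (m + 1) := by
  induction m using lucas.induct with
  | case1 => rfl
  | case2 => rfl
  | case3 m ih₀ ih₁ =>
    simp only [lucas, Nat.fib_add_two] at *
    omega

lemma lucas_pos (m : ℕ) : 0 < lucas m := by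
  have := lucas_add_fib m
  have := Nat.fib_pos.2 (by omega : 0 < m + 1)
  have := Nat.fib_le_fib_succ (n := m)
  omega

lemma coe_lucas_eq (m : ℕ) : (lucas m : ℝ) = φ ^ m + ψ ^ m := by
  have h : (lucas m : ℝ) + Nat.fib m = 2 * Nat.fib (m + 1) := by exact_mod_cast lucas_add_fib m
  linear_combination h + fib_succ_sub_goldenConj_mul_fib m + fib_succ_sub_goldenRatio_mul_fib m
    + (Nat.fib m : ℝ) * goldenRatio_add_goldenConj

lemma goldenRatio_pow_mul_goldenConj_pow (e : ℕ) : φ ^ e * ψ ^ e = (-1) ^ e := by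
  rw [← mul_pow, goldenRatio_mul_goldenConj]

lemma fib_add_two_mul_add (a e : ℕ) :
    (Nat.fib (a + 2 * e) : ℝ) + (-1) ^ e * Nat.fib a = Nat.fib (a + e) * lucas e := by
  have h := goldenRatio_pow_mul_goldenConj_pow e
  simp only [coe_fib_eq, coe_lucas_eq, two_mul, pow_add]
  linear_combination (ψ ^ a - φ ^ a) / √5 * h

lemma fib_add_two_mul_sub (a e : ℕ) :
    (Nat.fib (a + 2 * e) : ℝ) - (-1) ^ e * Nat.fib a = lucas (a + e) * Nat.fib e := by
  have h := goldenRatio_pow_mul_goldenConj_pow e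
  simp only [coe_fib_eq, coe_lucas_eq, two_mul, pow_add]
  linear_combination (φ ^ a - ψ ^ a) / √5 * h

lemma tendsto_lucas_div_fib :
    Tendsto (fun m : ℕ => (lucas m : ℝ) / Nat.fib m) atTop (𝓝 √5) := by
  set r : ℝ := ψ / φ
  have hr : |r| < 1 := by
    rw [abs_div, abs_of_pos goldenRatio_pos, abs_of_neg goldenConj_neg, div_lt_one goldenRatio_pos]
    linarith [neg_one_lt_goldenConj, one_lt_goldenRatio]
  -- at `m = 0` both sides are `0` by `x / 0 = 0`
  have key : ∀ m : ℕ, (lucas m : ℝ) / Nat.fib m = √5 * (1 + r ^ m) / (1 - r ^ m) := by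
    intro m
    have hψ : ψ ^ m = φ ^ m * r ^ m := by
      rw [← mul_pow, mul_div_cancel₀ _ goldenRatio_ne_zero]
    have hφ : φ ^ m ≠ 0 := pow_ne_zero _ goldenRatio_ne_zero
    rw [coe_lucas_eq, coe_fib_eq, hψ, div_div_eq_mul_div, ← mul_one_add, ← mul_one_sub,
      mul_comm, ← mul_assoc, mul_right_comm, mul_comm (φ ^ m), mul_div_mul_right _ _ hφ]
  have hlim : Tendsto (fun x : ℝ => √5 * (1 + x) / (1 - x)) (𝓝 0) (𝓝 √5) := by
    have : ContinuousAt (fun x : ℝ => √5 * (1 + x) / (1 - x)) 0 := by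
      fun_prop (disch := norm_num)
    simpa using this.tendsto
  exact (hlim.comp (tendsto_pow_atTop_nhds_zero_of_abs_lt_one hr)).congr fun m => (key m).symm

lemma prod_range_div_succ {K : Type*} [CommGroupWithZero K] (f : ℕ → K) (hf : ∀ i, f i ≠ 0)
    (n : ℕ) : ∏ i ∈ range n, f i / f (i + 1) = f 0 / f n := by
  induction n with
  | zero => simp [hf 0]
  | succ n ih => rw [prod_range_succ, ih, div_mul_div_cancel₀ (hf n)]

lemma hasProd_of_one_le_of_tendsto_prod_range {f : ℕ → ℝ} {L : ℝ} (hf : ∀ k, 1 ≤ f k)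
    (hL : Tendsto (fun K => ∏ k ∈ range K, f k) atTop (𝓝 L)) : HasProd f L := by
  have hL1 : 1 ≤ L := ge_of_tendsto' hL fun K => one_le_prod fun k _ => hf k
  have hf0 : ∀ k, 0 < f k := fun k => one_pos.trans_le (hf k)
  have hlog : HasSum (fun k => log (f k)) (log L) := by
    refine (hasSum_iff_tendsto_nat_of_nonneg (fun k => log_nonneg (hf k)) _).2 ?_
    have := ((continuousAt_log (by positivity)).tendsto).comp hL
    refine this.congr fun K => ?_
    exact log_prod fun k _ => (hf0 k).ne'
  simpa [exp_log (one_pos.trans_le hL1)] using hasProd_of_hasSum_log hf0 hlog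

noncomputable def lucasDivFib (m : ℕ) : ℝ := lucas m / Nat.fib m

lemma lucasDivFib_pos {m : ℕ} (hm : 0 < m) : 0 < lucasDivFib m :=
  div_pos (by exact_mod_cast lucas_pos m) (by exact_mod_cast Nat.fib_pos.2 hm)

lemma fib_add_div_fib_sub_of_even {a e : ℕ} (he : Even e) :
    ((Nat.fib (a + 2 * e) : ℝ) + Nat.fib a) / (Nat.fib (a + 2 * e) - Nat.fib a) =
      lucasDivFib e / lucasDivFib (a + e) := by
  have hadd := fib_add_two_mul_add a e
  have hsub := fib_add_two_mul_sub a e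
  rw [he.neg_one_pow, one_mul] at hadd hsub
  rw [hadd, hsub, lucasDivFib, lucasDivFib, div_div_div_eq]
  ring

lemma one_le_fib_add_div_fib_sub_of_even {a e : ℕ} (he : Even e) (he0 : 0 < e) :
    1 ≤ ((Nat.fib (a + 2 * e) : ℝ) + Nat.fib a) / (Nat.fib (a + 2 * e) - Nat.fib a) := by
  have hsub := fib_add_two_mul_sub a e
  rw [he.neg_one_pow, one_mul] at hsub
  have hpos : (0 : ℝ) < Nat.fib (a + 2 * e) - Nat.fib a := by
    rw [hsub]
    exact mul_pos (by exact_mod_cast lucas_pos _) (by exact_mod_cast Nat.fib_pos.2 he0)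
  rw [one_le_div hpos]
  linarith [(Nat.fib a).cast_nonneg (α := ℝ)]

noncomputable def lucasDivFibWindow (n q K : ℕ) : ℝ :=
  ∏ j ∈ range (2 * q), lucasDivFib (2 * n * (K + 1 + j))

section
variable {n : ℕ} (q : ℕ)

lemma lucasDivFibWindow_pos (hn : 0 < n) (K : ℕ) : 0 < lucasDivFibWindow n q K :=
  prod_pos fun _ _ => lucasDivFib_pos (by positivity)

lemma fib_add_div_fib_sub_eq_window_div (hn : 0 < n) (k : ℕ) :
    ((Nat.fib (4 * n * ((k + 1) + q)) : ℝ) + Nat.fib (4 * n * q)) /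
        (Nat.fib (4 * n * ((k + 1) + q)) - Nat.fib (4 * n * q)) =
      lucasDivFibWindow n q k / lucasDivFibWindow n q (k + 1) := by
  have hfactor := fib_add_div_fib_sub_of_even (a := 4 * n * q) (e := 2 * n * (k + 1))
    ⟨n * (k + 1), by ring⟩
  rw [show 4 * n * q + 2 * (2 * n * (k + 1)) = 4 * n * ((k + 1) + q) by ring,
    show 4 * n * q + 2 * n * (k + 1) = 2 * n * (k + 1 + 2 * q) by ring] at hfactor
  rw [hfactor, div_eq_div_iff (lucasDivFib_pos (by positivity)).ne'
    (lucasDivFibWindow_pos q hn _).ne']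
  -- both sides are `∏_{j ≤ 2q} lucasDivFib (2n(k+1+j))`, split at the last resp. first factor
  rw [lucasDivFibWindow, lucasDivFibWindow, ← prod_range_succ, prod_range_succ', mul_comm]
  ring_nf

lemma tendsto_lucasDivFibWindow (hn : 0 < n) :
    Tendsto (lucasDivFibWindow n q) atTop (𝓝 (5 ^ q)) := by
  have h5 : (5 : ℝ) ^ q = ∏ _j ∈ range (2 * q), √5 := by
    rw [prod_const, card_range, pow_mul, sq_sqrt (by norm_num)]
  rw [h5]
  refine tendsto_finsetProd _ fun j _ => tendsto_lucas_div_fib.comp ?_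
  exact tendsto_atTop_mono (fun K => show K ≤ _ by nlinarith) tendsto_id

lemma lucasDivFibWindow_zero (n : ℕ) :
    lucasDivFibWindow n q 0 = ∏ k ∈ Icc 1 (2 * q), lucasDivFib (2 * n * k) := by
  rw [lucasDivFibWindow, ← Ico_add_one_right_eq_Icc, prod_Ico_eq_prod_range]
  simp only [zero_add, add_tsub_cancel_right, add_comm 1]

end

theorem stmt_14_general (q n : ℕ) (hn : 0 < n) :
    ∏' k : ℕ,
        ((Nat.fib (4 * n * ((k + 1) + q)) : ℝ) + (Nat.fib (4 * n * q) : ℝ)) /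
          ((Nat.fib (4 * n * ((k + 1) + q)) : ℝ) - (Nat.fib (4 * n * q) : ℝ)) =
      (1 / (5 : ℝ) ^ q) *
        ∏ k ∈ Finset.Icc 1 (2 * q), (lucas (2 * n * k) : ℝ) / (Nat.fib (2 * n * k) : ℝ) := by
  have hone (k : ℕ) :
      1 ≤ ((Nat.fib (4 * n * ((k + 1) + q)) : ℝ) + Nat.fib (4 * n * q)) /
        (Nat.fib (4 * n * ((k + 1) + q)) - Nat.fib (4 * n * q)) := by
    rw [show 4 * n * ((k + 1) + q) = 4 * n * q + 2 * (2 * n * (k + 1)) by ring]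
    exact one_le_fib_add_div_fib_sub_of_even ⟨n * (k + 1), by ring⟩ (by positivity)
  have hpartial : Tendsto (fun K => ∏ k ∈ range K,
      ((Nat.fib (4 * n * ((k + 1) + q)) : ℝ) + Nat.fib (4 * n * q)) /
        (Nat.fib (4 * n * ((k + 1) + q)) - Nat.fib (4 * n * q)))
      atTop (𝓝 (lucasDivFibWindow n q 0 / 5 ^ q)) := by
    simp_rw [fib_add_div_fib_sub_eq_window_div q hn,
      prod_range_div_succ _ fun K => (lucasDivFibWindow_pos q hn K).ne']
    exact tendsto_const_nhds.div (tendsto_lucasDivFibWindow q hn) (by positivity)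
  rw [(hasProd_of_one_le_of_tendsto_prod_range hone hpartial).tprod_eq,
    lucasDivFibWindow_zero, one_div_mul_eq_div]
  rfl

theorem stmt_14 (q n : ℕ) (hq : 0 < q) (hn : 0 < n) :
    ∏' k : ℕ,
        ((Nat.fib (4 * n * ((k + 1) + q)) : ℝ) + (Nat.fib (4 * n * q) : ℝ)) /
          ((Nat.fib (4 * n * ((k + 1) + q)) : ℝ) - (Nat.fib (4 * n * q) : ℝ)) =
      (1 / (5 : ℝ) ^ q) *
        ∏ k ∈ Finset.Icc 1 (2 * q), (lucas (2 * n * k) : ℝ) / (Nat.fib (2 * n * k) : ℝ) :=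
  stmt_14_general q n hn
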